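/- Total Error Bound in the ε-Regime (Theorem 4.2): let A be a finite type with exactly two elements, B and C finite types, and p, q probability mass functions on A × B × C such that D_KL(p‖q) ≤ ε and the total variation distance satisfies δ(p,q) ≤ 1/2. Set I = H_p(A | C) − H_p(A | B × C) (the true conditional mutual information) and I_θ = H_q(A | C) − H_q(A | B × C) (the model-induced CMI). Let (Î_N)_{N≥1} be a sequence of real-valued random variables on a probability space converging almost surely to I_θ. Then, almost surely, limsup_{N→∞} |I − Î_N| ≤ 2·√(ε/2)·log 2 + 2·(1+√(ε/2))·h_b( √(ε/2) / (1+√(ε/2)) ). -/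

import Mathlib

open Finset

/-- Shannon entropy (in nats) of a probability mass function on a finite type,
with the convention `0 · log 0 = 0` (which holds since `Real.log 0 = 0`). -/
noncomputable def entropy {S : Type*} [Fintype S] (p : S → ℝ) : ℝ :=
  ∑ x, -(p x * Real.log (p x))

/-- Conditional Shannon entropy `H_p(A | B)` of a pmf `p` on a product
`A × B`: `∑_b p_B(b) · H(p_{A|B=b})`, where terms with `p_B(b) = 0`
contribute `0` (the factor `p_B(b)` vanishes). -/
noncomputable def condEntropy {A B : Type*} [Fintype A] [Fintype B]
    (p : A × B → ℝ) : ℝ :=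
  ∑ b, (∑ a, p (a, b)) * entropy (fun a => p (a, b) / ∑ a', p (a', b))

/-- Conditional mutual information `I_p(A; B | C)` of a pmf `p` on
`A × B × C`, defined as `H_p(A | C) − H_p(A | B × C)`. -/
noncomputable def cmi {A B C : Type*} [Fintype A] [Fintype B] [Fintype C]
    (p : A × B × C → ℝ) : ℝ :=
  condEntropy (fun ac : A × C => ∑ b, p (ac.1, b, ac.2)) -
    condEntropy (fun abc : A × (B × C) => p (abc.1, abc.2.1, abc.2.2))

/-- Kullback–Leibler divergence (in nats) between two pmfs on a finite type,
with the convention that terms with `p x = 0` contribute `0`. -/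
noncomputable def klDiv {S : Type*} [Fintype S] (p q : S → ℝ) : ℝ :=
  ∑ x, p x * Real.log (p x / q x)

/-- Total variation distance between two pmfs on a finite type. -/
noncomputable def tvDist {S : Type*} [Fintype S] (p q : S → ℝ) : ℝ :=
  (1 / 2) * ∑ x, |p x - q x|

/-- Binary entropy function (in nats), `h_b(x) = −x log x − (1−x) log(1−x)`,
with `h_b(0) = h_b(1) = 0` (automatic since `Real.log 0 = 0`). -/
noncomputable def binEntropy (x : ℝ) : ℝ :=
  -(x * Real.log x) - (1 - x) * Real.log (1 - x)

/-!
Pinsker's inequality turns `D(p‖q) ≤ ε` into `δ(p, q) ≤ s := √(ε/2)`, and summing out `B` does not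
increase `δ`. Both conditional entropies in `I = H(A|C) - H(A|B,C)` are then controlled by the
Alicki–Fannes–Winter bound `|H_p(A|B) - H_q(A|B)| ≤ s log |A| + (1 + s) h_b(s / (1 + s))`: writing
`p + s r = q + s r'` with pmfs `r, r'` built from the positive parts of `q - p` and `p - q`, the
common mixture `(p + s r) / (1 + s)` is compared with `p` by concavity of conditional entropy and
with `q` by its almost-convexity (mixing raises it by at most `h_b` of the weight). Finally
`Î_N → I_θ` almost surely, so `limsup |I - Î_N| = |I - I_θ|` almost surely.
-/

noncomputable def klTerm (x y : ℝ) : ℝ := x * Real.log (x / y)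

@[simp] lemma klTerm_zero_left (y : ℝ) : klTerm 0 y = 0 := by simp [klTerm]

@[simp] lemma klTerm_zero_right (x : ℝ) : klTerm x 0 = 0 := by simp [klTerm]

lemma klTerm_eq_mul_log_sub {x y : ℝ} (hy : y ≠ 0) :
    klTerm x y = x * Real.log x - x * Real.log y := by
  rcases eq_or_ne x 0 with rfl | hx
  · simp
  · rw [klTerm, Real.log_div hx hy, mul_sub]

lemma klTerm_mul_mul {c : ℝ} (hc : 0 ≤ c) (x y : ℝ) :
    klTerm (c * x) (c * y) = c * klTerm x y := by
  rcases hc.eq_or_lt with rfl | hc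
  · simp
  · rw [klTerm, klTerm, mul_div_mul_left x y hc.ne', mul_assoc]

lemma klTerm_nonpos {x y : ℝ} (hx : 0 ≤ x) (hxy : x ≤ y) : klTerm x y ≤ 0 := by
  rcases hx.eq_or_lt with rfl | hx
  · simp
  · exact mul_nonpos_of_nonneg_of_nonpos hx.le <|
      Real.log_nonpos (div_pos hx (hx.trans_le hxy)).le ((div_le_one (hx.trans_le hxy)).mpr hxy)

lemma klTerm_add_le {u v s t : ℝ} (hu : 0 ≤ u) (hv : 0 ≤ v) (hs : 0 ≤ s) (ht : 0 ≤ t)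
    (hus : s = 0 → u = 0) (hvt : t = 0 → v = 0) :
    klTerm (u + v) (s + t) ≤ klTerm u s + klTerm v t := by
  rcases hs.eq_or_lt with rfl | hs
  · simp [hus rfl]
  rcases ht.eq_or_lt with rfl | ht
  · simp [hvt rfl]
  have hst : 0 < s + t := by positivity
  -- `klTerm x y = y * f (x / y)` with `f z = z log z` convex: this is Jensen for the weights `s, t`.
  have jensen := Real.convexOn_mul_log.2 (Set.mem_Ici.2 (div_nonneg hu hs.le))
    (Set.mem_Ici.2 (div_nonneg hv ht.le)) (div_nonneg hs.le hst.le) (div_nonneg ht.le hst.le)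
    (by field_simp)
  have hmean : s / (s + t) * (u / s) + t / (s + t) * (v / t) = (u + v) / (s + t) := by
    field_simp
  simp only [smul_eq_mul, hmean] at jensen
  have key := mul_le_mul_of_nonneg_left jensen hst.le
  refine (Eq.le ?_).trans (key.trans_eq ?_) <;> unfold klTerm <;> field_simp

lemma klTerm_sum_le {ι : Type*} (s : Finset ι) (w y : ι → ℝ)
    (hw : ∀ i ∈ s, 0 ≤ w i) (hy : ∀ i ∈ s, 0 ≤ y i) (hwy : ∀ i ∈ s, y i = 0 → w i = 0) :
    klTerm (∑ i ∈ s, w i) (∑ i ∈ s, y i) ≤ ∑ i ∈ s, klTerm (w i) (y i) := by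
  induction s using Finset.cons_induction with
  | empty => simp
  | cons a s ha ih =>
    simp only [Finset.forall_mem_cons] at hw hy hwy
    rw [sum_cons, sum_cons, sum_cons]
    have hsupp : ∑ i ∈ s, y i = 0 → ∑ i ∈ s, w i = 0 := fun h =>
      sum_eq_zero fun i hi => hwy.2 i hi ((sum_eq_zero_iff_of_nonneg hy.2).mp h i hi)
    exact (klTerm_add_le hw.1 (sum_nonneg hw.2) hy.1 (sum_nonneg hy.2) hwy.1 hsupp).trans
      (add_le_add_right (ih hw.2 hy.2 hwy.2) _)

lemma negMulLog_add_le {u v : ℝ} (hu : 0 ≤ u) (hv : 0 ≤ v) :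
    Real.negMulLog (u + v) ≤ Real.negMulLog u + Real.negMulLog v := by
  have hlog : ∀ {x y : ℝ}, 0 ≤ x → 0 ≤ y → x * Real.log x ≤ x * Real.log (x + y) := by
    intro x y hx hy
    rcases hx.eq_or_lt with rfl | hx
    · simp
    · exact mul_le_mul_of_nonneg_left (Real.log_le_log hx (by linarith)) hx.le
  have hu' := hlog hu hv
  have hv' := hlog hv hu
  rw [add_comm v u] at hv'
  simp only [Real.negMulLog, neg_mul]
  linarith [add_mul u v (Real.log (u + v))]

lemma binEntropy_eq_negMulLog_add (x : ℝ) :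
    binEntropy x = Real.negMulLog x + Real.negMulLog (1 - x) := by
  simp only [binEntropy, Real.negMulLog, neg_mul]
  ring

lemma sum_negMulLog_mix_le {S : Type*} [Fintype S] {x y : S → ℝ}
    (hx : ∀ i, 0 ≤ x i) (hy : ∀ i, 0 ≤ y i) (hx1 : ∑ i, x i = 1) (hy1 : ∑ i, y i = 1)
    {l : ℝ} (hl0 : 0 ≤ l) (hl1 : l ≤ 1) :
    ∑ i, Real.negMulLog (l * x i + (1 - l) * y i) ≤
      l * ∑ i, Real.negMulLog (x i) + (1 - l) * ∑ i, Real.negMulLog (y i) + binEntropy l := by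
  have hterm : ∀ i, Real.negMulLog (l * x i + (1 - l) * y i) ≤
      (l * Real.negMulLog (x i) + x i * Real.negMulLog l) +
        ((1 - l) * Real.negMulLog (y i) + y i * Real.negMulLog (1 - l)) := fun i => by
    rw [← Real.negMulLog_mul, ← Real.negMulLog_mul, mul_comm (x i), mul_comm (y i)]
    exact negMulLog_add_le (mul_nonneg hl0 (hx i)) (mul_nonneg (by linarith) (hy i))
  refine (sum_le_sum fun i _ => hterm i).trans_eq ?_
  simp only [sum_add_distrib, ← mul_sum, ← sum_mul, hx1, hy1, binEntropy_eq_negMulLog_add]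
  ring

lemma le_sum_fst {A B : Type*} [Fintype A] {p : A × B → ℝ} (hp : ∀ x, 0 ≤ p x) (a : A) (b : B) :
    p (a, b) ≤ ∑ a', p (a', b) :=
  single_le_sum (fun a' _ => hp (a', b)) (mem_univ a)

section CondEntropy

variable {A B : Type*} [Fintype A] [Fintype B]

lemma condEntropy_eq_neg_sum_klTerm (p : A × B → ℝ) :
    condEntropy p = -∑ b, ∑ a, klTerm (p (a, b)) (∑ a', p (a', b)) := by
  simp only [condEntropy, entropy, mul_sum, ← sum_neg_distrib]
  refine sum_congr rfl fun b _ => sum_congr rfl fun a _ => ?_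
  rcases eq_or_ne (∑ a', p (a', b)) 0 with h | h
  · simp [h]
  · rw [klTerm]
    field_simp

lemma condEntropy_eq_sub (p : A × B → ℝ) (hp : ∀ x, 0 ≤ p x) :
    condEntropy p = ∑ x, Real.negMulLog (p x) - ∑ b, Real.negMulLog (∑ a, p (a, b)) := by
  have hfiber : ∀ b, -∑ a, klTerm (p (a, b)) (∑ a', p (a', b)) =
      ∑ a, Real.negMulLog (p (a, b)) - Real.negMulLog (∑ a, p (a, b)) := fun b => by
    rcases eq_or_ne (∑ a', p (a', b)) 0 with h | h
    · have hzero := (sum_eq_zero_iff_of_nonneg fun a _ => hp (a, b)).mp h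
      simp [hzero]
    · simp only [klTerm_eq_mul_log_sub h, sum_sub_distrib, ← sum_mul, Real.negMulLog, neg_mul,
        sum_neg_distrib]
      ring
  rw [condEntropy_eq_neg_sum_klTerm, ← sum_neg_distrib, sum_congr rfl fun b _ => hfiber b,
    sum_sub_distrib, Fintype.sum_prod_type, sum_comm]

lemma condEntropy_nonneg (p : A × B → ℝ) (hp : ∀ x, 0 ≤ p x) : 0 ≤ condEntropy p := by
  rw [condEntropy_eq_neg_sum_klTerm, neg_nonneg]
  exact sum_nonpos fun b _ => sum_nonpos fun a _ => klTerm_nonpos (hp _) (le_sum_fst hp a b)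

lemma condEntropy_le_log_card (p : A × B → ℝ) (hp : ∀ x, 0 ≤ p x) (hp1 : ∑ x, p x = 1) :
    condEntropy p ≤ Real.log (Fintype.card A) := by
  -- log-sum against the constant family `a ↦ p_B(b)`, whose total is `|A| · p_B(b)`
  have hfiber : ∀ b, -((∑ a, p (a, b)) * Real.log (Fintype.card A)) ≤
      ∑ a, klTerm (p (a, b)) (∑ a', p (a', b)) := fun b => by
    have h := klTerm_sum_le univ (fun a => p (a, b)) (fun _ => ∑ a', p (a', b))
      (fun a _ => hp _) (fun a _ => sum_nonneg fun a' _ => hp _)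
      (fun a _ h => le_antisymm (h ▸ le_sum_fst hp a b) (hp _))
    rw [sum_const, card_univ, nsmul_eq_mul] at h
    refine le_trans (le_of_eq ?_) h
    rcases eq_or_ne (∑ a, p (a, b)) 0 with hb | hb
    · simp [hb]
    · rw [klTerm, div_mul_cancel_right₀ hb, Real.log_inv, mul_neg]
  have hmarg : ∑ b, ∑ a, p (a, b) = 1 := by rw [← hp1, Fintype.sum_prod_type, sum_comm]
  rw [condEntropy_eq_neg_sum_klTerm, neg_le, ← one_mul (Real.log _), ← hmarg, sum_mul,
    ← sum_neg_distrib]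
  exact sum_le_sum fun b _ => hfiber b

lemma condEntropy_concave (p r : A × B → ℝ) (hp : ∀ x, 0 ≤ p x) (hr : ∀ x, 0 ≤ r x)
    {l : ℝ} (hl0 : 0 ≤ l) (hl1 : l ≤ 1) :
    l * condEntropy p + (1 - l) * condEntropy r ≤
      condEntropy (fun x => l * p x + (1 - l) * r x) := by
  have hl1' : 0 ≤ 1 - l := by linarith
  have hterm : ∀ a b, klTerm (l * p (a, b) + (1 - l) * r (a, b))
      (∑ a', (l * p (a', b) + (1 - l) * r (a', b))) ≤
      l * klTerm (p (a, b)) (∑ a', p (a', b)) + (1 - l) * klTerm (r (a, b)) (∑ a', r (a', b)) :=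
      fun a b => by
    rw [sum_add_distrib, ← mul_sum, ← mul_sum, ← klTerm_mul_mul hl0, ← klTerm_mul_mul hl1']
    refine klTerm_add_le (mul_nonneg hl0 (hp _)) (mul_nonneg hl1' (hr _))
      (mul_nonneg hl0 (sum_nonneg fun _ _ => hp _)) (mul_nonneg hl1' (sum_nonneg fun _ _ => hr _))
      (fun h => le_antisymm ?_ (mul_nonneg hl0 (hp _)))
      (fun h => le_antisymm ?_ (mul_nonneg hl1' (hr _)))
    · exact h ▸ mul_le_mul_of_nonneg_left (le_sum_fst hp a b) hl0
    · exact h ▸ mul_le_mul_of_nonneg_left (le_sum_fst hr a b) hl1'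
  simp only [condEntropy_eq_neg_sum_klTerm, mul_neg, ← neg_add, neg_le_neg_iff, mul_sum,
    ← sum_add_distrib]
  exact sum_le_sum fun b _ => sum_le_sum fun a _ => hterm a b

lemma condEntropy_mix_le (p r : A × B → ℝ) (hp : ∀ x, 0 ≤ p x) (hr : ∀ x, 0 ≤ r x)
    (hp1 : ∑ x, p x = 1) (hr1 : ∑ x, r x = 1) {l : ℝ} (hl0 : 0 ≤ l) (hl1 : l ≤ 1) :
    condEntropy (fun x => l * p x + (1 - l) * r x) ≤
      l * condEntropy p + (1 - l) * condEntropy r + binEntropy l := by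
  have hmix : ∀ x, 0 ≤ l * p x + (1 - l) * r x := fun x =>
    add_nonneg (mul_nonneg hl0 (hp x)) (mul_nonneg (by linarith) (hr x))
  have hjoint := sum_negMulLog_mix_le hp hr hp1 hr1 hl0 hl1
  have hmarg : l * ∑ b, Real.negMulLog (∑ a, p (a, b)) +
      (1 - l) * ∑ b, Real.negMulLog (∑ a, r (a, b)) ≤
      ∑ b, Real.negMulLog (∑ a, (l * p (a, b) + (1 - l) * r (a, b))) := by
    rw [mul_sum, mul_sum, ← sum_add_distrib]
    refine sum_le_sum fun b _ => ?_
    rw [sum_add_distrib, ← mul_sum, ← mul_sum]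
    simpa using Real.concaveOn_negMulLog.2 (Set.mem_Ici.2 (sum_nonneg fun a _ => hp (a, b)))
      (Set.mem_Ici.2 (sum_nonneg fun a _ => hr (a, b))) hl0 (by linarith) (add_sub_cancel l 1)
  rw [condEntropy_eq_sub p hp, condEntropy_eq_sub r hr, condEntropy_eq_sub _ hmix]
  linarith

end CondEntropy

section TotalVariation

variable {S : Type*} [Fintype S]

lemma tvDist_nonneg (p q : S → ℝ) : 0 ≤ tvDist p q :=
  mul_nonneg (by norm_num) (sum_nonneg fun x _ => abs_nonneg _)

lemma tvDist_comm (p q : S → ℝ) : tvDist p q = tvDist q p := by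
  simp only [tvDist, abs_sub_comm]

lemma eq_of_tvDist_eq_zero {p q : S → ℝ} (h : tvDist p q = 0) : p = q := by
  have hsum : ∑ x, |p x - q x| = 0 := by
    simpa [tvDist] using h
  funext x
  exact sub_eq_zero.mp <| abs_eq_zero.mp <|
    (sum_eq_zero_iff_of_nonneg fun x _ => abs_nonneg _).mp hsum x (mem_univ x)

lemma sum_max_sub_zero_eq_tvDist {p q : S → ℝ} (hpq : ∑ x, p x = ∑ x, q x) :
    ∑ x, max (q x - p x) 0 = tvDist p q := by
  have hmax : ∀ x, max (q x - p x) 0 = (|p x - q x| + (q x - p x)) / 2 := fun x => by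
    rw [abs_sub_comm]
    rcases le_total (q x - p x) 0 with h | h
    · rw [max_eq_right h, abs_of_nonpos h]; ring
    · rw [max_eq_left h, abs_of_nonneg h]; ring
  simp only [hmax, ← sum_div, sum_add_distrib, sum_sub_distrib, hpq, tvDist]
  ring

end TotalVariation

section ContinuityBound

variable {A B : Type*} [Fintype A] [Fintype B]

lemma condEntropy_sub_le_of_add_smul_eq {p q r r' : A × B → ℝ}
    (hp : ∀ x, 0 ≤ p x) (hq : ∀ x, 0 ≤ q x) (hq1 : ∑ x, q x = 1)
    (hr : ∀ x, 0 ≤ r x) (hr' : ∀ x, 0 ≤ r' x) (hr'1 : ∑ x, r' x = 1)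
    {s : ℝ} (hs : 0 ≤ s) (h : ∀ x, p x + s * r x = q x + s * r' x) :
    condEntropy p - condEntropy q ≤
      s * Real.log (Fintype.card A) + (1 + s) * binEntropy (s / (1 + s)) := by
  have h1s : 0 < 1 + s := by linarith
  set l := s / (1 + s) with hl
  have hl0 : 0 ≤ l := div_nonneg hs h1s.le
  have hl1 : l ≤ 1 := (div_le_one h1s).mpr (by linarith)
  have hmix : (fun x => l * r x + (1 - l) * p x) = fun x => l * r' x + (1 - l) * q x := by
    funext x
    have hx := h x
    rw [hl]
    field_simp
    linarith
  have hconc := condEntropy_concave r p hr hp hl0 hl1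
  have hconv := condEntropy_mix_le r' q hr' hq hr'1 hq1 hl0 hl1
  rw [← hmix] at hconv
  have hr'le := condEntropy_le_log_card r' hr' hr'1
  have hrnn := condEntropy_nonneg r hr
  have hfactor : (1 - l) * (1 + s) = 1 := by rw [hl]; field_simp; ring
  have hkey : (1 - l) * (condEntropy p - condEntropy q) ≤
      l * Real.log (Fintype.card A) + binEntropy l := by
    nlinarith
  calc condEntropy p - condEntropy q
      = (1 + s) * ((1 - l) * (condEntropy p - condEntropy q)) := by
        rw [← mul_assoc, mul_comm (1 + s), hfactor, one_mul]
    _ ≤ (1 + s) * (l * Real.log (Fintype.card A) + binEntropy l) :=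
        mul_le_mul_of_nonneg_left hkey h1s.le
    _ = s * Real.log (Fintype.card A) + (1 + s) * binEntropy l := by
        rw [hl]; field_simp

lemma condEntropy_sub_le_of_tvDist_le {p q : A × B → ℝ}
    (hp : ∀ x, 0 ≤ p x) (hp1 : ∑ x, p x = 1) (hq : ∀ x, 0 ≤ q x) (hq1 : ∑ x, q x = 1)
    {s : ℝ} (hs : tvDist p q ≤ s) :
    condEntropy p - condEntropy q ≤
      s * Real.log (Fintype.card A) + (1 + s) * binEntropy (s / (1 + s)) := by
  set t := tvDist p q
  have ht0 : 0 ≤ t := tvDist_nonneg p q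
  rcases (ht0.trans hs).eq_or_lt with rfl | hs0
  · rw [eq_of_tvDist_eq_zero (le_antisymm hs ht0)]
    simp [binEntropy]
  -- `p + s r = q + s r' = max p q + (s - t) p`, with `r, r'` pmfs since `∑ (q - p)⁺ = t`
  set r : A × B → ℝ := fun x => (max (q x - p x) 0 + (s - t) * p x) / s
  set r' : A × B → ℝ := fun x => (max (p x - q x) 0 + (s - t) * p x) / s
  have hpad : ∀ x, 0 ≤ (s - t) * p x := fun x => mul_nonneg (by linarith) (hp x)
  have hsum : ∀ {u v : A × B → ℝ}, ∑ x, u x = ∑ x, v x → tvDist u v = t →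
      ∑ x, (max (v x - u x) 0 + (s - t) * p x) / s = 1 := fun huv htv => by
    rw [← sum_div, sum_add_distrib, sum_max_sub_zero_eq_tvDist huv, htv, ← mul_sum, hp1]
    field_simp
    ring
  refine condEntropy_sub_le_of_add_smul_eq (r := r) (r' := r') hp hq hq1
    (fun x => div_nonneg (add_nonneg (le_max_right _ _) (hpad x)) hs0.le)
    (fun x => div_nonneg (add_nonneg (le_max_right _ _) (hpad x)) hs0.le)
    (hsum (hq1.trans hp1.symm) (tvDist_comm q p)) hs0.le fun x => ?_
  simp only [r, r', mul_div_cancel₀ _ hs0.ne']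
  rcases le_total (p x) (q x) with h | h
  · rw [max_eq_left (by linarith), max_eq_right (by linarith)]; ring
  · rw [max_eq_right (by linarith), max_eq_left (by linarith)]; ring

lemma abs_condEntropy_sub_le_of_tvDist_le {p q : A × B → ℝ}
    (hp : ∀ x, 0 ≤ p x) (hp1 : ∑ x, p x = 1) (hq : ∀ x, 0 ≤ q x) (hq1 : ∑ x, q x = 1)
    {s : ℝ} (hs : tvDist p q ≤ s) :
    |condEntropy p - condEntropy q| ≤
      s * Real.log (Fintype.card A) + (1 + s) * binEntropy (s / (1 + s)) :=
  abs_sub_le_iff.mpr ⟨condEntropy_sub_le_of_tvDist_le hp hp1 hq hq1 hs,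
    condEntropy_sub_le_of_tvDist_le hq hq1 hp hp1 (tvDist_comm q p ▸ hs)⟩

end ContinuityBound

section Pinsker

lemma hasDerivAt_binaryKL_sub_sq (P : ℝ) {z : ℝ} (hz0 : 0 < z) (hz1 : z < 1) :
    HasDerivAt (fun z => -(P * Real.log z) - (1 - P) * Real.log (1 - z) - 2 * (P - z) ^ 2)
      ((z - P) * (2 * z - 1) ^ 2 / (z * (1 - z))) z := by
  have h1z : 1 - z ≠ 0 := by linarith
  have hlog := ((hasDerivAt_id z).const_sub 1).log h1z
  have H := (((Real.hasDerivAt_log hz0.ne').const_mul P).neg.sub (hlog.const_mul (1 - P))).sub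
    ((((hasDerivAt_id z).const_sub P).pow 2).const_mul 2)
  refine H.congr_deriv ?_
  simp only [id]
  field_simp
  ring

/-- Binary Pinsker: `z ↦ kl(P, z) - 2 (P - z)²` vanishes at `P` and increases on `[P, 1)`. -/
lemma two_mul_sq_le_klTerm_add_klTerm_of_le {P Q : ℝ} (hP : 0 ≤ P) (hPQ : P ≤ Q) (hQ : Q < 1) :
    2 * (P - Q) ^ 2 ≤ klTerm P Q + klTerm (1 - P) (1 - Q) := by
  rcases (hP.trans hPQ).eq_or_lt with hQ0 | hQ0
  · obtain rfl : P = 0 := le_antisymm (hQ0 ▸ hPQ) hP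
    simp [← hQ0, klTerm]
  set g : ℝ → ℝ := fun z => -(P * Real.log z) - (1 - P) * Real.log (1 - z) - 2 * (P - z) ^ 2
  have hcont_log : ContinuousOn (fun z => P * Real.log z) (Set.Icc P Q) := by
    rcases hP.eq_or_lt with rfl | hP
    · simpa using continuousOn_const
    · exact continuousOn_const.mul
        (Real.continuousOn_log.mono fun z hz => (hP.trans_le hz.1).ne')
  have hcont : ContinuousOn g (Set.Icc P Q) := by
    refine (hcont_log.neg.sub (continuousOn_const.mul ?_)).sub (by fun_prop)
    exact (continuousOn_const.sub continuousOn_id).log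
      fun z hz => (sub_pos.2 (hz.2.trans_lt hQ)).ne'
  have hmono : MonotoneOn g (Set.Icc P Q) := by
    refine monotoneOn_of_hasDerivWithinAt_nonneg (convex_Icc P Q) hcont
      (f' := fun z => (z - P) * (2 * z - 1) ^ 2 / (z * (1 - z))) (fun z hz => ?_) fun z hz => ?_
    all_goals rw [interior_Icc] at hz
    · exact (hasDerivAt_binaryKL_sub_sq P (hP.trans_lt hz.1) (hz.2.trans hQ)).hasDerivWithinAt
    · have hz0 : 0 < z := hP.trans_lt hz.1
      have hz1 : 0 < 1 - z := by linarith [hz.2]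
      have : 0 ≤ z - P := by linarith [hz.1]
      positivity
  have hgPQ := hmono (Set.left_mem_Icc.2 hPQ) (Set.right_mem_Icc.2 hPQ) hPQ
  rw [klTerm_eq_mul_log_sub hQ0.ne', klTerm_eq_mul_log_sub (by linarith)]
  simp only [g] at hgPQ
  linarith

lemma two_mul_sq_le_klTerm_add_klTerm {P Q : ℝ} (hQ : 0 ≤ Q) (hQP : Q ≤ P) (hP : P ≤ 1)
    (hsupp : Q = 0 → P = 0) :
    2 * (P - Q) ^ 2 ≤ klTerm P Q + klTerm (1 - P) (1 - Q) := by
  rcases hQ.eq_or_lt with rfl | hQ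
  · simp [hsupp rfl, klTerm]
  have h := two_mul_sq_le_klTerm_add_klTerm_of_le (P := 1 - P) (Q := 1 - Q)
    (by linarith) (by linarith) (by linarith)
  rw [sub_sub_cancel, sub_sub_cancel] at h
  linarith

variable {S : Type*} [Fintype S]

lemma tvDist_eq_sum_filter {p q : S → ℝ} (hpq : ∑ x, p x = ∑ x, q x) :
    tvDist p q = ∑ x ∈ univ.filter (fun x => q x ≤ p x), (p x - q x) := by
  rw [tvDist_comm, ← sum_max_sub_zero_eq_tvDist hpq.symm, sum_filter]
  refine sum_congr rfl fun x _ => ?_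
  split_ifs with h
  · exact max_eq_left (by linarith)
  · exact max_eq_right (by linarith)

lemma pinsker {p q : S → ℝ} (hp : ∀ x, 0 ≤ p x) (hp1 : ∑ x, p x = 1)
    (hq : ∀ x, 0 ≤ q x) (hq1 : ∑ x, q x = 1) (hsupp : ∀ x, q x = 0 → p x = 0) :
    2 * tvDist p q ^ 2 ≤ klDiv p q := by
  classical
  set E := univ.filter fun x => q x ≤ p x
  have hcompl : ∀ f : S → ℝ, ∑ x ∈ Eᶜ, f x = ∑ x, f x - ∑ x ∈ E, f x := fun f => by
    rw [eq_sub_iff_add_eq, add_comm, sum_add_sum_compl]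
  have hlogsum : ∀ F : Finset S, klTerm (∑ x ∈ F, p x) (∑ x ∈ F, q x) ≤
      ∑ x ∈ F, klTerm (p x) (q x) := fun F =>
    klTerm_sum_le F p q (fun x _ => hp x) (fun x _ => hq x) fun x _ => hsupp x
  have hEsupp : ∑ x ∈ E, q x = 0 → ∑ x ∈ E, p x = 0 := fun h =>
    sum_eq_zero fun x hx => hsupp x ((sum_eq_zero_iff_of_nonneg fun x _ => hq x).mp h x hx)
  have hbinary := two_mul_sq_le_klTerm_add_klTerm (sum_nonneg fun x _ => hq x)
    (sum_le_sum fun x hx => (mem_filter.mp hx).2) (hp1 ▸ sum_le_univ_sum_of_nonneg hp) hEsupp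
  have hkl : klDiv p q = ∑ x ∈ E, klTerm (p x) (q x) + ∑ x ∈ Eᶜ, klTerm (p x) (q x) :=
    (sum_add_sum_compl E _).symm
  rw [tvDist_eq_sum_filter (hp1.trans hq1.symm), sum_sub_distrib, hkl]
  have hEc := hlogsum Eᶜ
  rw [hcompl, hcompl, hp1, hq1] at hEc
  linarith [hlogsum E]

end Pinsker

section ConditionalMutualInformation

variable {A B C : Type*} [Fintype A] [Fintype B] [Fintype C]

lemma sum_sum_middle (f : A × B × C → ℝ) :
    ∑ ac : A × C, ∑ b, f (ac.1, b, ac.2) = ∑ x, f x := by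
  simp only [Fintype.sum_prod_type]
  exact sum_congr rfl fun a _ => sum_comm

lemma tvDist_sum_middle_le (p q : A × B × C → ℝ) :
    tvDist (fun ac : A × C => ∑ b, p (ac.1, b, ac.2))
      (fun ac : A × C => ∑ b, q (ac.1, b, ac.2)) ≤ tvDist p q := by
  refine mul_le_mul_of_nonneg_left ?_ (by norm_num)
  rw [← sum_sum_middle fun x => |p x - q x|]
  refine sum_le_sum fun ac _ => ?_
  rw [← sum_sub_distrib]
  exact abs_sum_le_sum_abs _ _

lemma abs_cmi_sub_le (hA : Fintype.card A = 2) {p q : A × B × C → ℝ}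
    (hp : ∀ x, 0 ≤ p x) (hp1 : ∑ x, p x = 1) (hq : ∀ x, 0 ≤ q x) (hq1 : ∑ x, q x = 1)
    (hsupp : ∀ x, 0 < p x → 0 < q x) {ε : ℝ} (hkl : klDiv p q ≤ ε) :
    |cmi p - cmi q| ≤ 2 * Real.sqrt (ε / 2) * Real.log 2 +
      2 * (1 + Real.sqrt (ε / 2)) * binEntropy (Real.sqrt (ε / 2) / (1 + Real.sqrt (ε / 2))) := by
  have htv : tvDist p q ≤ Real.sqrt (ε / 2) := by
    refine Real.le_sqrt_of_sq_le ?_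
    have := pinsker hp hp1 hq hq1 fun x hx =>
      ((hp x).eq_or_lt.resolve_right fun hpos => (hsupp x hpos).ne' hx).symm
    linarith
  have hmarg_nonneg : ∀ (r : A × B × C → ℝ), (∀ x, 0 ≤ r x) →
      ∀ ac : A × C, 0 ≤ ∑ b, r (ac.1, b, ac.2) := fun r hr ac => sum_nonneg fun b _ => hr _
  have hAC := abs_condEntropy_sub_le_of_tvDist_le (hmarg_nonneg p hp)
    ((sum_sum_middle p).trans hp1) (hmarg_nonneg q hq) ((sum_sum_middle q).trans hq1)
    ((tvDist_sum_middle_le p q).trans htv)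
  have hABC := abs_condEntropy_sub_le_of_tvDist_le (B := B × C) hp hp1 hq hq1 htv
  rw [hA, Nat.cast_ofNat] at hAC hABC
  have htri : |cmi p - cmi q| ≤
      |condEntropy (fun ac : A × C => ∑ b, p (ac.1, b, ac.2)) -
        condEntropy (fun ac : A × C => ∑ b, q (ac.1, b, ac.2))| +
      |condEntropy (B := B × C) p - condEntropy q| := by
    rw [cmi, cmi, sub_sub_sub_comm]
    exact abs_sub _ _
  linarith

end ConditionalMutualInformation

open Filter MeasureTheory

theorem total_error_bound_eps_regime_general
    {A B C : Type*} [Fintype A] [Fintype B] [Fintype C]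
    (hA : Fintype.card A = 2)
    (p q : A × B × C → ℝ)
    (hp : ∀ x, 0 ≤ p x) (hpsum : ∑ x, p x = 1)
    (hq : ∀ x, 0 ≤ q x) (hqsum : ∑ x, q x = 1)
    (hqpos : ∀ x, 0 < p x → 0 < q x)
    (ε : ℝ) (hkl : klDiv p q ≤ ε)
    {Ω : Type*} [MeasurableSpace Ω] (μ : Measure Ω)
    (Ihat : ℕ → Ω → ℝ)
    (hconv : ∀ᵐ ω ∂μ, Tendsto (fun N => Ihat N ω) atTop (nhds (cmi q))) :
    ∀ᵐ ω ∂μ,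
      limsup (fun N => |cmi p - Ihat N ω|) atTop ≤
        2 * Real.sqrt (ε / 2) * Real.log 2 +
          2 * (1 + Real.sqrt (ε / 2)) *
            binEntropy (Real.sqrt (ε / 2) / (1 + Real.sqrt (ε / 2))) := by
  filter_upwards [hconv] with ω hω
  rw [(tendsto_const_nhds.sub hω).abs.limsup_eq]
  exact abs_cmi_sub_le hA hp hpsum hq hqsum hqpos hkl

/-- **Total Error Bound in the ε-regime (Theorem 4.2).**  Let `A` be binary,
`p, q` pmfs on `A × B × C` with `D_KL(p‖q) ≤ ε` and `δ(p,q) ≤ 1/2`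
(the ε-oracle assumption).  Let `I = I_p(A;B|C)` be the true CMI and
`I_θ = I_q(A;B|C)` the model-induced CMI, and let `Î_N` be random variables
converging almost surely to `I_θ`.  Then, almost surely,
`limsup_N |I − Î_N| ≤ 2·√(ε/2)·log 2 + 2·(1+√(ε/2))·h_b(√(ε/2)/(1+√(ε/2)))`. -/
theorem total_error_bound_eps_regime
    {A B C : Type*} [Fintype A] [Fintype B] [Fintype C]
    (hA : Fintype.card A = 2)
    (p q : A × B × C → ℝ)
    (hp : ∀ x, 0 ≤ p x) (hpsum : ∑ x, p x = 1)
    (hq : ∀ x, 0 ≤ q x) (hqsum : ∑ x, q x = 1)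
    (hqpos : ∀ x, 0 < p x → 0 < q x)
    (ε : ℝ) (hkl : klDiv p q ≤ ε) (htv : tvDist p q ≤ 1 / 2)
    {Ω : Type*} [MeasurableSpace Ω] (μ : Measure Ω) [IsProbabilityMeasure μ]
    (Ihat : ℕ → Ω → ℝ)
    (hconv : ∀ᵐ ω ∂μ, Tendsto (fun N => Ihat N ω) atTop (nhds (cmi q))) :
    ∀ᵐ ω ∂μ,
      limsup (fun N => |cmi p - Ihat N ω|) atTop ≤
        2 * Real.sqrt (ε / 2) * Real.log 2 +
          2 * (1 + Real.sqrt (ε / 2)) *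
            binEntropy (Real.sqrt (ε / 2) / (1 + Real.sqrt (ε / 2))) :=
  total_error_bound_eps_regime_general hA p q hp hpsum hq hqsum hqpos ε hkl μ Ihat hconv
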